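/- Let S be a string, Y_S = y₁⋯y_t an m-bounded parsing, and suppose ∑_{i} -log₂ p_{H₁}(yᵢ, yᵢ₋₁) ≤ B where p_{H₁}(y, y') = (1/m)·cnt(y'y)/cnt(y') (with some fixed convention for the first phrase). If, for each fixed preceding phrase y', ∑_{y} p_{H₁}(y,y')·m = ∑_y cnt(y'y)/cnt(y') ≤ m over distinct following substrings y of each length, so that ∑_y p_{H₁}(y,y') ≤ 1, then t·H₁(Y_S) ≤ B, where H₁(Y_S) is the first order entropy of the parsing string. -/

import Mathlib

open Finset

/-- `cnt S w` = number of occurrences of the word `w` as a substring of `S`. -/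
def cnt {α : Type*} [DecidableEq α] (S w : List α) : ℕ :=
  ((Finset.range S.length).filter
    (fun i => (S.drop i).take w.length = w ∧ i + w.length ≤ S.length)).card

/-- First order empirical entropy of a string `T` (over the letters occurring in it):
`H₁(T) = (1/|T|) ∑_{σ,a} cnt_T(σa) log₂(cnt_T(σ·)/cnt_T(σa))`. -/
noncomputable def H1 {α : Type*} [DecidableEq α] (T : List α) : ℝ :=
  (1 / (T.length : ℝ)) * ∑ σ ∈ T.toFinset, ∑ a ∈ T.toFinset,
    (cnt T [σ, a] : ℝ) *
      Real.logb 2 ((∑ b ∈ T.toFinset, (cnt T [σ, b] : ℝ)) / (cnt T [σ, a] : ℝ))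

/-- `p_{H₁}(y, y') = (1/m)·cnt(y'y)/cnt(y')`. -/
noncomputable def pH1 {Γ : Type*} [DecidableEq Γ] (S : List Γ) (m : ℕ)
    (y y' : List Γ) : ℝ :=
  (1 / (m : ℝ)) * (cnt S (y' ++ y) : ℝ) / (cnt S y' : ℝ)

/-!
Grouping the cost by consecutive phrase pairs `(σ, a)` of `Y` turns it into
`∑_σ ∑_a cnt_Y(σa) · (-log₂ p_{H₁}(a, σ))`, while `|Y| · H₁(Y)` is the same double sum with
`-log₂ p_{H₁}(a, σ)` replaced by `log₂ (cnt_Y(σ·) / cnt_Y(σa))`. Since every phrase has length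
in `1..m`, the hypothesis on `p_{H₁}(·, σ)` makes it a sub-probability on the phrases, so
Gibbs' inequality compares the inner sums for each `σ`.
-/

theorem mul_log_div_add_mul_log_le {C c p : ℝ} (hc : 0 ≤ c) (hcC : c ≤ C) (hp : 0 ≤ p)
    (hcp : 0 < c → 0 < p) : c * Real.log (C / c) + c * Real.log p ≤ C * p - c := by
  rcases hc.eq_or_lt with rfl | hc
  · simpa using mul_nonneg (hc.trans hcC) hp
  have hp := hcp hc
  have hC := hc.trans_le hcC
  calc c * Real.log (C / c) + c * Real.log p = c * Real.log (C * p / c) := by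
        rw [Real.log_div hC.ne' hc.ne', Real.log_div (by positivity) hc.ne',
          Real.log_mul hC.ne' hp.ne']
        ring
    _ ≤ c * (C * p / c - 1) := by gcongr; exact Real.log_le_sub_one_of_pos (by positivity)
    _ = C * p - c := by field_simp

/-- Gibbs' inequality, for unnormalized weights `c` and a sub-probability `p`. -/
theorem sum_mul_logb_div_le_sum_mul_neg_logb {ι : Type*} (A : Finset ι) {c p : ι → ℝ}
    (hc : ∀ a ∈ A, 0 ≤ c a) (hp : ∀ a ∈ A, 0 ≤ p a) (hcp : ∀ a ∈ A, 0 < c a → 0 < p a)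
    (hps : ∑ a ∈ A, p a ≤ 1) :
    ∑ a ∈ A, c a * Real.logb 2 ((∑ b ∈ A, c b) / c a) ≤ ∑ a ∈ A, c a * -Real.logb 2 (p a) := by
  set C := ∑ b ∈ A, c b
  have hlog : ∑ a ∈ A, (c a * Real.log (C / c a) + c a * Real.log (p a)) ≤ 0 := calc
    _ ≤ ∑ a ∈ A, (C * p a - c a) := sum_le_sum fun a ha =>
          mul_log_div_add_mul_log_le (hc a ha) (single_le_sum hc ha) (hp a ha) (hcp a ha)
    _ = C * (∑ a ∈ A, p a - 1) := by rw [sum_sub_distrib, ← mul_sum]; ring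
    _ ≤ 0 := mul_nonpos_of_nonneg_of_nonpos (sum_nonneg hc) (by linarith)
  rw [← sub_nonpos, ← sum_sub_distrib]
  calc ∑ a ∈ A, (c a * Real.logb 2 (C / c a) - c a * -Real.logb 2 (p a))
      = (∑ a ∈ A, (c a * Real.log (C / c a) + c a * Real.log (p a))) / Real.log 2 := by
        rw [sum_div]
        refine sum_congr rfl fun a _ => ?_
        simp only [Real.logb]
        ring
    _ ≤ 0 := div_nonpos_of_nonpos_of_nonneg hlog (Real.log_nonneg one_le_two)

section Counting

variable {α : Type*} [DecidableEq α]

@[simp]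
theorem cnt_nil (w : List α) : cnt [] w = 0 := rfl

theorem cnt_cons (x : α) (S w : List α) :
    cnt (x :: S) w = cnt S w + if w <+: x :: S then 1 else 0 := by
  unfold cnt
  rw [card_filter, card_filter, List.length_cons, sum_range_succ']
  congr 1
  · refine sum_congr rfl fun i _ => if_congr ?_ rfl rfl
    simp only [List.drop_succ_cons]
    exact and_congr_right fun _ => by omega
  · refine if_congr ?_ rfl rfl
    simp only [List.drop_zero, zero_add]
    exact ⟨fun h => List.prefix_iff_eq_take.mpr h.1.symm,
      fun h => ⟨(List.prefix_iff_eq_take.mp h).symm, h.length_le⟩⟩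

theorem infix_of_cnt_pos {S w : List α} (h : 0 < cnt S w) : w <:+: S := by
  obtain ⟨i, hi⟩ := card_pos.mp h
  rw [mem_filter] at hi
  rw [← hi.2.1]
  exact (List.take_prefix _ _).isInfix.trans (List.drop_suffix _ _).isInfix

theorem cnt_pos {S w : List α} (hw : w ≠ []) (h : w <:+: S) : 0 < cnt S w := by
  obtain ⟨s, t, rfl⟩ := h
  refine card_pos.mpr ⟨s.length, mem_filter.mpr ⟨?_, ?_, ?_⟩⟩
  · simp [List.length_pos_iff.mpr hw]
  · rw [List.append_assoc, List.drop_left, List.take_left]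
  · simp

theorem sum_map_zip_tail_eq_sum_cnt_mul (f : α × α → ℝ) {A : Finset α} :
    ∀ {Y : List α}, (∀ y ∈ Y, y ∈ A) →
      ((Y.zip Y.tail).map f).sum = ∑ σ ∈ A, ∑ a ∈ A, (cnt Y [σ, a] : ℝ) * f (σ, a)
  | [], _ => by simp
  | [x], _ => by simp [cnt_cons]
  | x :: y :: r, hY => by
    have hx : x ∈ A := hY x (by simp)
    have hy : y ∈ A := hY y (by simp)
    have ih := sum_map_zip_tail_eq_sum_cnt_mul f (Y := y :: r) fun z hz => hY z (by simp [hz])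
    simp only [List.tail_cons] at ih
    simp [cnt_cons (x := x), add_mul, sum_add_distrib, ← ih, ite_and, hx, hy, add_comm]

end Counting

theorem natCast_length_mul_H1 {α : Type*} [DecidableEq α] (T : List α) :
    (T.length : ℝ) * H1 T = ∑ σ ∈ T.toFinset, ∑ a ∈ T.toFinset, (cnt T [σ, a] : ℝ) *
      Real.logb 2 ((∑ b ∈ T.toFinset, (cnt T [σ, b] : ℝ)) / (cnt T [σ, a] : ℝ)) := by
  rcases eq_or_ne T [] with rfl | hT
  · simp
  · rw [H1, ← mul_assoc, mul_one_div_cancel (by simpa using hT), one_mul]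

section PH1

variable {Γ : Type*} [DecidableEq Γ]

theorem pH1_nonneg (S : List Γ) (m : ℕ) (y y' : List Γ) : 0 ≤ pH1 S m y y' := by
  unfold pH1
  positivity

theorem pH1_pos {S : List Γ} {m : ℕ} {y y' : List Γ} (hm : 0 < m) (hy' : y' ≠ [])
    (h : y' ++ y <:+: S) : 0 < pH1 S m y y' := by
  have hyy' : 0 < cnt S (y' ++ y) := cnt_pos (by simp [hy']) h
  have hy'S : 0 < cnt S y' := cnt_pos hy' ((List.prefix_append y' y).isInfix.trans h)
  unfold pH1
  positivity

theorem pH1_pos_of_cnt_pos {S : List Γ} {m : ℕ} {Y : List (List Γ)} {y y' : List Γ}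
    (hm : 0 < m) (hjoin : Y.flatten = S) (hy' : y' ≠ []) (h : 0 < cnt Y [y', y]) :
    0 < pH1 S m y y' :=
  pH1_pos hm hy' (by simpa [hjoin] using (infix_of_cnt_pos h).flatten)

theorem sum_le_sum_sum_ofFn [Fintype Γ] {f : List Γ → ℝ} (hf : ∀ w, 0 ≤ f w)
    {A : Finset (List Γ)} {Z : Finset ℕ} (hA : ∀ a ∈ A, a.length ∈ Z) :
    ∑ a ∈ A, f a ≤ ∑ z ∈ Z, ∑ w : Fin z → Γ, f (List.ofFn w) := by
  rw [← sum_fiberwise_of_maps_to hA]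
  refine sum_le_sum fun z _ => ?_
  rw [← sum_image fun _ _ _ _ h => List.ofFn_injective h]
  refine sum_le_sum_of_subset_of_nonneg (fun a ha => ?_) fun w _ _ => hf w
  obtain rfl := (mem_filter.mp ha).2
  exact mem_image.mpr ⟨a.get, mem_univ _, List.ofFn_get a⟩

end PH1

theorem parsing_first_order_entropy_le_cost_general {Γ : Type*} [DecidableEq Γ] [Fintype Γ]
    (S : List Γ) (m : ℕ) (hm : 1 ≤ m)
    (Y : List (List Γ)) (hjoin : Y.flatten = S)
    (hb : ∀ y ∈ Y, y ≠ [] ∧ y.length ≤ m)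
    (hkraft : ∀ y' ∈ Y, ∑ z ∈ Finset.Icc 1 m,
        ∑ f : Fin z → Γ, pH1 S m (List.ofFn f) y' ≤ 1)
    (B : ℝ)
    (hcost : ((Y.zip Y.tail).map (fun yy => - Real.logb 2 (pH1 S m yy.2 yy.1))).sum ≤ B) :
    (Y.length : ℝ) * H1 Y ≤ B := by
  have hlen : ∀ y ∈ Y.toFinset, y.length ∈ Icc 1 m := fun y hy => by
    obtain ⟨hne, hle⟩ := hb y (List.mem_toFinset.mp hy)
    exact mem_Icc.mpr ⟨List.length_pos_iff.mpr hne, hle⟩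
  have hgibbs : ∀ σ ∈ Y.toFinset,
      ∑ a ∈ Y.toFinset, (cnt Y [σ, a] : ℝ) *
          Real.logb 2 ((∑ b ∈ Y.toFinset, (cnt Y [σ, b] : ℝ)) / (cnt Y [σ, a] : ℝ))
        ≤ ∑ a ∈ Y.toFinset, (cnt Y [σ, a] : ℝ) * -Real.logb 2 (pH1 S m a σ) := fun σ hσ =>
    have hσ := List.mem_toFinset.mp hσ
    sum_mul_logb_div_le_sum_mul_neg_logb _ (fun _ _ => Nat.cast_nonneg _)
      (fun a _ => pH1_nonneg S m a σ)
      (fun a _ h => pH1_pos_of_cnt_pos hm hjoin (hb σ hσ).1 (Nat.cast_pos.mp h))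
      ((sum_le_sum_sum_ofFn (pH1_nonneg S m · σ) hlen).trans (hkraft σ hσ))
  calc (Y.length : ℝ) * H1 Y
      ≤ ∑ σ ∈ Y.toFinset, ∑ a ∈ Y.toFinset, (cnt Y [σ, a] : ℝ) * -Real.logb 2 (pH1 S m a σ) :=
        (natCast_length_mul_H1 Y).trans_le (sum_le_sum hgibbs)
    _ = ((Y.zip Y.tail).map (fun yy => - Real.logb 2 (pH1 S m yy.2 yy.1))).sum :=
        (sum_map_zip_tail_eq_sum_cnt_mul (fun yy => -Real.logb 2 (pH1 S m yy.2 yy.1))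
          fun _ => List.mem_toFinset.mpr).symm
    _ ≤ B := hcost

/-- If an `m`-bounded parsing `Y` of `S` satisfies
`∑ᵢ -log₂ p_{H₁}(yᵢ, yᵢ₋₁) ≤ B` (the first phrase carrying no cost, by convention),
and for each preceding phrase `y'` the values `p_{H₁}(·, y')` summed over following
words of each length `1..z..m` total at most `1`, then `|Y|·H₁(Y) ≤ B`,
where `H₁(Y)` is the first order entropy of the parsing viewed as a string over the
phrase alphabet. -/
theorem parsing_first_order_entropy_le_cost {Γ : Type*} [DecidableEq Γ] [Fintype Γ]
    (S : List Γ) (hS : S ≠ []) (m : ℕ) (hm : 1 ≤ m)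
    (Y : List (List Γ)) (hjoin : Y.flatten = S)
    (hb : ∀ y ∈ Y, y ≠ [] ∧ y.length ≤ m)
    (hkraft : ∀ y' ∈ Y, ∑ z ∈ Finset.Icc 1 m,
        ∑ f : Fin z → Γ, pH1 S m (List.ofFn f) y' ≤ 1)
    (B : ℝ)
    (hcost : ((Y.zip Y.tail).map (fun yy => - Real.logb 2 (pH1 S m yy.2 yy.1))).sum ≤ B) :
    (Y.length : ℝ) * H1 Y ≤ B :=
  parsing_first_order_entropy_le_cost_general S m hm Y hjoin hb hkraft B hcost
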